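/- Let σ be a permutation of {1,...,n} and v₁,...,v_n homogeneous elements of a Z/2-graded vector space, with w_i = πv_i their parity reversions. Then (-1)^{(n-1)|v₁|+(n-2)|v₂|+···+|v_{n-1}|} · sgn(σ) · ε(σ; v₁,...,v_n) = (-1)^{(n-1)|v_{σ(1)}|+(n-2)|v_{σ(2)}|+···+|v_{σ(n-1)}|} · ε(σ; w₁,...,w_n), where |w_i| = |v_i| + 1 mod 2. -/

import Mathlib

/-- `(-1)^a` for `a : ZMod 2`. -/
def pSign (k : Type*) [CommRing k] (a : ZMod 2) : k := (-1 : k) ^ a.val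

/-- The Koszul sign `ε(σ; v₁,…,v_n)` of a permutation acting on elements with
parities `p i`. -/
def koszulSign (k : Type*) [CommRing k] {n : ℕ} (p : Fin n → ZMod 2)
    (σ : Equiv.Perm (Fin n)) : k :=
  ∏ x ∈ Finset.univ.filter (fun x : Fin n × Fin n => x.1 < x.2 ∧ σ x.2 < σ x.1),
    (-1 : k) ^ ((p (σ x.1)) * (p (σ x.2))).val

/-!
Let `I` be the set of inversions of `σ`. Then `sgn σ = (-1)^|I|` and
`ε(σ; v) = (-1)^{Σ_I |v_{σa}| |v_{σb}|}`, so expanding `(|v_{σa}| + 1)(|v_{σb}| + 1)` gives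
`ε(σ; w) = sgn σ · ε(σ; v) · (-1)^{Σ_I (|v_{σa}| + |v_{σb}|)}`.
The number of inversions through `i` is `≡ i + σ i (mod 2)`: they are what separates
`{j | j < i}` (of size `i`) from `{j | σ j < σ i}` (of size `σ i`).
Hence `Σ_I (|v_{σa}| + |v_{σb}|) ≡ Σ_i (i + σ i) |v_{σ i}|`, which is the sum of the two
exponents `Σ (n-1-i) |v_i|` and `Σ (n-1-i) |v_{σ i}|` modulo 2.
-/

open Finset

section PSign

variable (k : Type*) [CommRing k]

theorem pSign_add (a b : ZMod 2) : pSign k (a + b) = pSign k a * pSign k b := by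
  rw [pSign, pSign, pSign, ZMod.val_add, ← pow_add, ← neg_one_pow_eq_pow_mod_two]

theorem pSign_natCast (m : ℕ) : pSign k m = (-1) ^ m := by
  rw [pSign, ZMod.val_natCast, ← neg_one_pow_eq_pow_mod_two]

theorem pSign_sum {ι : Type*} (s : Finset ι) (f : ι → ZMod 2) :
    pSign k (∑ i ∈ s, f i) = ∏ i ∈ s, pSign k (f i) := by
  classical
  induction s using Finset.induction_on with
  | empty => simp [pSign]
  | insert i s hi ih => rw [sum_insert hi, prod_insert hi, pSign_add, ih]

end PSign

namespace Equiv.Perm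

variable {n : ℕ}

def inversions (σ : Perm (Fin n)) : Finset (Fin n × Fin n) :=
  univ.filter fun x => x.1 < x.2 ∧ σ x.2 < σ x.1

theorem sign_eq_neg_one_pow_card_inversions (σ : Perm (Fin n)) :
    sign σ = (-1) ^ #σ.inversions := by
  rw [sign_eq_prod_prod_Ioi, inversions, ← prod_const, prod_filter, Fintype.prod_prod_type]
  refine prod_congr rfl fun i _ => ?_
  rw [← filter_lt_eq_Ioi, prod_filter]
  refine prod_congr rfl fun j _ => ?_
  grind [σ.injective.eq_iff]

theorem card_filter_apply_lt_apply (σ : Perm (Fin n)) (i : Fin n) :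
    #{j | σ j < σ i} = σ i := by
  rw [← Fin.card_Iio (σ i)]
  exact card_equiv σ (by simp)

theorem cast_card_inversions_through (σ : Perm (Fin n)) (i : Fin n) :
    (#{j | i < j ∧ σ j < σ i} + #{j | j < i ∧ σ i < σ j} : ZMod 2) =
      (i : ℕ) + (σ i : ℕ) := by
  have below_image : #{j | j < i ∧ σ j < σ i} + #{j | i < j ∧ σ j < σ i} = σ i := by
    rw [← card_filter_apply_lt_apply σ i,
      ← card_filter_add_card_filter_not (s := {j | σ j < σ i}) (· < i),
      filter_filter, filter_filter]
    congr 2 <;> ext j <;> simp only [mem_filter, mem_univ, true_and] <;> grind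
  have below : #{j | j < i ∧ σ j < σ i} + #{j | j < i ∧ σ i < σ j} = i := by
    rw [← Fin.card_Iio i, ← filter_gt_eq_Iio,
      ← card_filter_add_card_filter_not (s := {j | j < i}) (fun j => σ j < σ i),
      filter_filter, filter_filter]
    congr 2
    ext j
    simp only [mem_filter, mem_univ, true_and]
    grind [σ.injective.eq_iff]
  rw [← Nat.cast_add, ← Nat.cast_add, ZMod.natCast_eq_natCast_iff']
  omega

theorem sum_inversions_fst {M : Type*} [AddCommMonoid M] (σ : Perm (Fin n)) (f : Fin n → M) :
    ∑ x ∈ σ.inversions, f x.1 = ∑ i, #{j | i < j ∧ σ j < σ i} • f i := by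
  rw [inversions, sum_filter, Fintype.sum_prod_type]
  simp only [← sum_filter, sum_const]

theorem sum_inversions_snd {M : Type*} [AddCommMonoid M] (σ : Perm (Fin n)) (f : Fin n → M) :
    ∑ x ∈ σ.inversions, f x.2 = ∑ i, #{j | j < i ∧ σ i < σ j} • f i := by
  rw [inversions, sum_filter, Fintype.sum_prod_type, sum_comm]
  simp only [← sum_filter, sum_const]

theorem sum_inversions_fst_add_snd (σ : Perm (Fin n)) (f : Fin n → ZMod 2) :
    ∑ x ∈ σ.inversions, (f x.1 + f x.2) =
      ∑ i : Fin n, (((i : ℕ) : ZMod 2) + (σ i : ℕ)) * f i := by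
  rw [sum_add_distrib, sum_inversions_fst, sum_inversions_snd, ← sum_add_distrib]
  refine sum_congr rfl fun i _ => ?_
  rw [nsmul_eq_mul, nsmul_eq_mul, ← add_mul, cast_card_inversions_through]

theorem sum_sub_one_sub_mul_eq_sum_inversions_add (p : Fin n → ZMod 2) (σ : Perm (Fin n)) :
    ∑ i : Fin n, ((n - 1 - (i : ℕ) : ℕ) : ZMod 2) * p i =
      ∑ x ∈ σ.inversions, (p (σ x.1) + p (σ x.2)) +
        ∑ i : Fin n, ((n - 1 - (i : ℕ) : ℕ) : ZMod 2) * p (σ i) := by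
  rw [sum_inversions_fst_add_snd σ (fun i => p (σ i)),
    ← Equiv.sum_comp σ (fun i : Fin n => ((n - 1 - (i : ℕ) : ℕ) : ZMod 2) * p i),
    ← sum_add_distrib]
  refine sum_congr rfl fun i _ => ?_
  have reflect : ((n - 1 - (σ i : ℕ) : ℕ) : ZMod 2) =
      (i : ℕ) + (σ i : ℕ) + (n - 1 - (i : ℕ) : ℕ) := by
    rw [← Nat.cast_add, ← Nat.cast_add, ZMod.natCast_eq_natCast_iff']
    omega
  rw [reflect, add_mul]

end Equiv.Perm

section KoszulSign

variable (k : Type*) [CommRing k] {n : ℕ}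

theorem cast_sign_eq_pSign (σ : Equiv.Perm (Fin n)) :
    ((Equiv.Perm.sign σ : ℤ) : k) = pSign k #σ.inversions := by
  rw [pSign_natCast, σ.sign_eq_neg_one_pow_card_inversions]
  push_cast
  rfl

theorem koszulSign_eq_pSign_sum (p : Fin n → ZMod 2) (σ : Equiv.Perm (Fin n)) :
    koszulSign k p σ = pSign k (∑ x ∈ σ.inversions, p (σ x.1) * p (σ x.2)) := by
  rw [pSign_sum]
  rfl

theorem koszulSign_add_one (p : Fin n → ZMod 2) (σ : Equiv.Perm (Fin n)) :
    koszulSign k (fun i => p i + 1) σ =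
      (Equiv.Perm.sign σ : ℤ) * koszulSign k p σ *
        pSign k (∑ x ∈ σ.inversions, (p (σ x.1) + p (σ x.2))) := by
  rw [koszulSign_eq_pSign_sum, koszulSign_eq_pSign_sum, cast_sign_eq_pSign, ← pSign_add,
    ← pSign_add, card_eq_sum_ones, Nat.cast_sum, ← sum_add_distrib, ← sum_add_distrib]
  exact congrArg _ (sum_congr rfl fun _ _ => by push_cast; ring)

end KoszulSign

theorem parity_reversion_sign_identity_general {k : Type*} [Field k] {n : ℕ}
    (p : Fin n → ZMod 2)
    (σ : Equiv.Perm (Fin n)) :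
    pSign k (∑ i : Fin n, ((n - 1 - (i : ℕ) : ℕ) : ZMod 2) * p i) *
        ((Equiv.Perm.sign σ : ℤ) : k) * koszulSign k p σ
      = pSign k (∑ i : Fin n, ((n - 1 - (i : ℕ) : ℕ) : ZMod 2) * p (σ i)) *
          koszulSign k (fun i => p i + 1) σ := by
  rw [koszulSign_add_one, σ.sum_sub_one_sub_mul_eq_sum_inversions_add p, pSign_add]
  ring

/-- Lemma 5: with `w_i = π v_i` the parity reversions
(`|w_i| = |v_i| + 1`),
`(-1)^{(n-1)|v₁|+⋯+|v_{n-1}|} sgn(σ) ε(σ; v) =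
 (-1)^{(n-1)|v_{σ(1)}|+⋯+|v_{σ(n-1)}|} ε(σ; w)`. -/
theorem parity_reversion_sign_identity {k V : Type*} [Field k]
    [AddCommGroup V] [Module k V]
    (𝒱 : ZMod 2 → Submodule k V) {n : ℕ}
    (v : Fin n → V) (p : Fin n → ZMod 2) (hp : ∀ i, v i ∈ 𝒱 (p i))
    (σ : Equiv.Perm (Fin n)) :
    pSign k (∑ i : Fin n, ((n - 1 - (i : ℕ) : ℕ) : ZMod 2) * p i) *
        ((Equiv.Perm.sign σ : ℤ) : k) * koszulSign k p σ
      = pSign k (∑ i : Fin n, ((n - 1 - (i : ℕ) : ℕ) : ZMod 2) * p (σ i)) *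
          koszulSign k (fun i => p i + 1) σ :=
  parity_reversion_sign_identity_general p σ
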